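/- The maximal order of ω(n) is O(log n / log log n): there exists a constant C such that for all integers n ≥ 3, ω(n) ≤ C · log n / log log n. -/

import Mathlib

/-!
Split the prime factors of `n` at a threshold `T`. At most `T` of them lie below `T`,
and the product of those at least `T` divides `n`, so there are at most `log n / log T` of them.
Choosing `T ≈ log n / log log n` makes both contributions `O(log n / log log n)`.
-/

open ArithmeticFunction
open scoped ArithmeticFunction.omega

namespace ArithmeticFunction

theorem cardDistinctFactors_eq_card_primeFactors (n : ℕ) : ω n = n.primeFactors.card :=
  (List.card_toFinset _).symm

theorem card_primeFactors_filter_lt_le (n T : ℕ) : (n.primeFactors.filter (· < T)).card ≤ T := by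
  simpa using Finset.card_le_card
    (fun p hp => Finset.mem_range.mpr (Finset.mem_filter.mp hp).2 :
      n.primeFactors.filter (· < T) ⊆ Finset.range T)

theorem pow_card_primeFactors_filter_le {n : ℕ} (hn : n ≠ 0) (T : ℕ) :
    T ^ (n.primeFactors.filter (¬ · < T)).card ≤ n :=
  calc T ^ (n.primeFactors.filter (¬ · < T)).card
      ≤ ∏ p ∈ n.primeFactors.filter (¬ · < T), p :=
        Finset.pow_card_le_prod _ _ _ fun _ hp => not_lt.mp (Finset.mem_filter.mp hp).2
    _ ≤ ∏ p ∈ n.primeFactors, p :=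
        Finset.prod_le_prod_of_subset_of_one_le' (Finset.filter_subset _ _)
          fun _ hp _ => Nat.pos_of_mem_primeFactors hp
    _ ≤ n := Nat.le_of_dvd (Nat.pos_of_ne_zero hn) (Nat.prod_primeFactors_dvd n)

theorem cardDistinctFactors_le_add_log_div_log {n T : ℕ} (hn : n ≠ 0) (hT : 1 < T) :
    (ω n : ℝ) ≤ T + Real.log n / Real.log T := by
  have hlogT : 0 < Real.log T := Real.log_pos (by exact_mod_cast hT)
  have hsmall : ((n.primeFactors.filter (· < T)).card : ℝ) ≤ T := by
    exact_mod_cast card_primeFactors_filter_lt_le n T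
  have hlarge : ((n.primeFactors.filter (¬ · < T)).card : ℝ) ≤ Real.log n / Real.log T := by
    rw [le_div_iff₀ hlogT, ← Real.log_pow]
    exact Real.log_le_log (by positivity) (by exact_mod_cast pow_card_primeFactors_filter_le hn T)
  rw [cardDistinctFactors_eq_card_primeFactors, ← Finset.card_filter_add_card_filter_not (· < T)]
  push_cast
  exact add_le_add hsmall hlarge

end ArithmeticFunction

theorem Real.log_le_half_self {x : ℝ} (hx : 0 < x) : Real.log x ≤ x / 2 := by
  have h := Real.log_le_sub_one_of_pos (half_pos hx)
  rw [Real.log_div hx.ne' two_ne_zero] at h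
  linarith [Real.log_two_lt_d9]

theorem Real.half_log_le_log_div_log {L : ℝ} (hL : 1 < L) :
    Real.log L / 2 ≤ Real.log (L / Real.log L) := by
  have hlog : 0 < Real.log L := Real.log_pos hL
  rw [Real.log_div (by linarith) hlog.ne']
  linarith [Real.log_le_half_self hlog]

theorem stmt_16 :
    ∃ C : ℝ, ∀ n : ℕ, 3 ≤ n →
      (ω n : ℝ) ≤ C * Real.log n / Real.log (Real.log n) := by
  refine ⟨4, fun n hn => ?_⟩
  set L := Real.log n
  set M := Real.log L
  have hL : 1 < L := by
    have h3 : (3 : ℝ) ≤ n := by exact_mod_cast hn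
    rw [Real.lt_log_iff_exp_lt (by positivity)]
    linarith [Real.exp_one_lt_d9]
  have hM : 0 < M := Real.log_pos hL
  have hLM : 1 < L / M := by
    rw [one_lt_div hM]
    linarith [Real.log_le_sub_one_of_pos (zero_lt_one.trans hL)]
  set T := ⌈L / M⌉₊
  have hT : 1 < T := Nat.lt_ceil.mpr (by exact_mod_cast hLM)
  have hTle : (T : ℝ) ≤ 2 * (L / M) := (Nat.ceil_lt_two_mul (by linarith)).le
  have hlogT : M / 2 ≤ Real.log T :=
    (Real.half_log_le_log_div_log hL).trans (Real.log_le_log (by linarith) (Nat.le_ceil _))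
  calc (ω n : ℝ) ≤ T + L / Real.log T :=
        cardDistinctFactors_le_add_log_div_log (by omega) hT
    _ ≤ 2 * (L / M) + L / (M / 2) := by gcongr
    _ = 4 * L / M := by field_simp; ring
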